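/- arXiv:2501.03651 — 9 statements merged into one kernel-verified Lean document; each statement's English description precedes it below -/
import Mathlib

section
/- Let (X,d) and (Y,ρ) be b-metric spaces with coefficients K₁ ≥ 1 and K₂ ≥ 1 respectively, and let f : X → Y be an injective η-quasisymmetry, where η : [0,∞) → [0,∞) is an increasing homeomorphism. If A ⊆ B ⊆ X with 0 < diam A and diam B < ∞, then diam f(A) ≤ η(2·K₁·diam A / diam B) · diam f(B). -/
/-- `d` is a semimetric: nonnegative, symmetric, and vanishing exactly on the diagonal. -/
def IsSemimetric {X : Type*} (d : X → X → ℝ) : Prop :=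
  (∀ x y, 0 ≤ d x y) ∧ (∀ x y, d x y = d y x) ∧ (∀ x y, d x y = 0 ↔ x = y)

/-- `d` is a b-metric with coefficient `K`. -/
def IsBMetric {X : Type*} (K : ℝ) (d : X → X → ℝ) : Prop :=
  IsSemimetric d ∧ ∀ x y z, d x y ≤ K * (d x z + d z y)

/-- `d` is a metric. -/
def IsMetric {X : Type*} (d : X → X → ℝ) : Prop :=
  IsSemimetric d ∧ ∀ x y z, d x y ≤ d x z + d z y

/-- `d` is an additive metric: a metric satisfying the four-point inequality. -/
def IsAdditiveMetric {X : Type*} (d : X → X → ℝ) : Prop :=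
  IsMetric d ∧ ∀ x y z u, d x y + d z u ≤ max (d x z + d y u) (d x u + d y z)

/-- `η` is an increasing homeomorphism of `[0,∞)` onto itself:
`η 0 = 0`, strictly increasing, continuous, mapping `[0,∞)` onto `[0,∞)`. -/
def IsIncrHomeo (η : ℝ → ℝ) : Prop :=
  η 0 = 0 ∧ StrictMonoOn η (Set.Ici 0) ∧ ContinuousOn η (Set.Ici 0) ∧
    Set.MapsTo η (Set.Ici 0) (Set.Ici 0) ∧ Set.SurjOn η (Set.Ici 0) (Set.Ici 0)

/-- `f` is an `η`-quasisymmetry from `(X, d)` to `(Y, ρ)`. -/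
def IsQuasisymmetry {X Y : Type*} (d : X → X → ℝ) (ρ : Y → Y → ℝ)
    (η : ℝ → ℝ) (f : X → Y) : Prop :=
  ∀ x a b : X, ∀ t : ℝ, 0 ≤ t → d x a ≤ t * d x b →
    ρ (f x) (f a) ≤ η t * ρ (f x) (f b)

/-- The diameter of a set `A` with respect to the semimetric `d`. -/
noncomputable def sdiam {X : Type*} (d : X → X → ℝ) (A : Set X) : ℝ :=
  sSup {r | ∃ x ∈ A, ∃ y ∈ A, r = d x y}

/-- `A` is bounded with respect to `d`, i.e. `sdiam d A < ∞`. -/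
def SBounded {X : Type*} (d : X → X → ℝ) (A : Set X) : Prop :=
  BddAbove {r | ∃ x ∈ A, ∃ y ∈ A, r = d x y}

/-- Right-hand inequality of the Tukia–Väisälä type estimate for b-metric spaces:
`diam f(A) ≤ η(2 K₁ diam A / diam B) · diam f(B)`. -/
theorem quasisymmetry_diam_upper {X Y : Type*}
    (K₁ K₂ : ℝ) (hK₁ : 1 ≤ K₁) (hK₂ : 1 ≤ K₂)
    (d : X → X → ℝ) (ρ : Y → Y → ℝ) (η : ℝ → ℝ) (f : X → Y)
    (hd : IsBMetric K₁ d) (hρ : IsBMetric K₂ ρ)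
    (hη : IsIncrHomeo η) (hf : Function.Injective f)
    (hqs : IsQuasisymmetry d ρ η f)
    (A B : Set X) (hAB : A ⊆ B)
    (hA : 0 < sdiam d A) (hB : SBounded d B) :
    sdiam ρ (f '' A) ≤ η (2 * K₁ * sdiam d A / sdiam d B) * sdiam ρ (f '' B) := by
  obtain ⟨⟨hd0, hdsymm, hdeq⟩, hdtri⟩ := hd
  obtain ⟨⟨hρ0, hρsymm, hρeq⟩, hρtri⟩ := hρ
  obtain ⟨hη0, hηmono, hηcont, hηmaps, hηsurj⟩ := hη
  have hK₁0 : (0:ℝ) < K₁ := lt_of_lt_of_le one_pos hK₁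
  have hK₂0 : (0:ℝ) < K₂ := lt_of_lt_of_le one_pos hK₂
  set SA := {r | ∃ x ∈ A, ∃ y ∈ A, r = d x y} with hSAdef
  set SB := {r | ∃ x ∈ B, ∃ y ∈ B, r = d x y} with hSBdef
  have hDA : sdiam d A = sSup SA := rfl
  have hDB : sdiam d B = sSup SB := rfl
  have hSAsub : SA ⊆ SB := by
    rintro r ⟨x, hx, y, hy, rfl⟩
    exact ⟨x, hAB hx, y, hAB hy, rfl⟩
  have hSBbdd : BddAbove SB := hB
  have hSAbdd : BddAbove SA := hSBbdd.mono hSAsub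
  have hSAne : SA.Nonempty := by
    by_contra h
    rw [Set.not_nonempty_iff_eq_empty] at h
    rw [hDA, h, Real.sSup_empty] at hA
    exact lt_irrefl 0 hA
  have hSBne : SB.Nonempty := hSAne.mono hSAsub
  have hA' : (0:ℝ) < sSup SA := hA
  obtain ⟨r0, ⟨x₀, hx₀, b₀, hb₀, rfl⟩, hr0⟩ := exists_lt_of_lt_csSup hSAne hA'
  have hDApos : 0 < sdiam d A := hA
  have hDAB : sdiam d A ≤ sdiam d B := by
    rw [hDA, hDB]; exact csSup_le_csSup hSBbdd hSAne hSAsub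
  have hDBpos : 0 < sdiam d B := lt_of_lt_of_le hDApos hDAB
  have hdB : ∀ u ∈ B, ∀ v ∈ B, d u v ≤ sdiam d B := by
    intro u hu v hv
    rw [hDB]; exact le_csSup hSBbdd ⟨u, hu, v, hv, rfl⟩
  -- boundedness of the image set
  set M := η (sdiam d B / d x₀ b₀) * ρ (f x₀) (f b₀) with hMdef
  have hx₀B : x₀ ∈ B := hAB hx₀
  have hb₀B : b₀ ∈ B := hAB hb₀
  have hM : ∀ a ∈ B, ρ (f x₀) (f a) ≤ M := by
    intro a ha
    refine hqs x₀ a b₀ (sdiam d B / d x₀ b₀) (div_nonneg hDBpos.le hr0.le) ?_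
    rw [div_mul_cancel₀ _ (ne_of_gt hr0)]
    exact hdB x₀ hx₀B a ha
  set SfB := {r | ∃ x ∈ f '' B, ∃ y ∈ f '' B, r = ρ x y} with hSfBdef
  have hDfB : sdiam ρ (f '' B) = sSup SfB := rfl
  have hSfBbdd : BddAbove SfB := by
    refine ⟨K₂ * (M + M), ?_⟩
    rintro r ⟨p, ⟨u, hu, rfl⟩, q, ⟨v, hv, rfl⟩, rfl⟩
    calc ρ (f u) (f v) ≤ K₂ * (ρ (f u) (f x₀) + ρ (f x₀) (f v)) := hρtri _ _ _
      _ ≤ K₂ * (M + M) := by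
          refine mul_le_mul_of_nonneg_left (add_le_add ?_ (hM v hv)) hK₂0.le
          rw [hρsymm]; exact hM u hu
  have hSfBmem0 : ρ (f x₀) (f x₀) ∈ SfB := ⟨f x₀, ⟨x₀, hx₀B, rfl⟩, f x₀, ⟨x₀, hx₀B, rfl⟩, rfl⟩
  have hDfB0 : 0 ≤ sdiam ρ (f '' B) := by
    rw [hDfB]
    have := le_csSup hSfBbdd hSfBmem0
    rwa [(hρeq _ _).mpr rfl] at this
  have hρB : ∀ u ∈ B, ∀ v ∈ B, ρ (f u) (f v) ≤ sdiam ρ (f '' B) := by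
    intro u hu v hv
    rw [hDfB]
    exact le_csSup hSfBbdd ⟨f u, ⟨u, hu, rfl⟩, f v, ⟨v, hv, rfl⟩, rfl⟩
  -- key estimate for every small ε
  have hkey : ∀ ε ∈ Set.Ioo (0:ℝ) (sdiam d B),
      sdiam ρ (f '' A) ≤ η (2 * K₁ * sdiam d A / (sdiam d B - ε)) * sdiam ρ (f '' B) := by
    rintro ε ⟨hε0, hεB⟩
    have hDBε : 0 < sdiam d B - ε := sub_pos.mpr hεB
    set t := 2 * K₁ * sdiam d A / (sdiam d B - ε) with htdef
    have ht0 : 0 ≤ t := div_nonneg (by positivity) hDBε.le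
    have hηt0 : 0 ≤ η t := hηmaps (Set.mem_Ici.mpr ht0)
    refine csSup_le ⟨ρ (f x₀) (f x₀), f x₀, ⟨x₀, hx₀, rfl⟩, f x₀, ⟨x₀, hx₀, rfl⟩, rfl⟩ ?_
    rintro r ⟨p, ⟨x, hx, rfl⟩, q, ⟨a, ha, rfl⟩, rfl⟩
    -- find u v in B with large distance
    have : sdiam d B - ε < sSup SB := by rw [← hDB]; exact sub_lt_self _ hε0
    obtain ⟨s, ⟨u, hu, v, hv, rfl⟩, hs⟩ := exists_lt_of_lt_csSup hSBne this
    have htri : d u v ≤ K₁ * (d x u + d x v) := by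
      have := hdtri u v x
      rwa [hdsymm u x] at this
    have hsum : (sdiam d B - ε) / K₁ ≤ d x u + d x v := by
      rw [div_le_iff₀' hK₁0]
      exact le_trans hs.le htri
    have hmax : (sdiam d B - ε) / (2 * K₁) ≤ max (d x u) (d x v) := by
      rw [div_le_iff₀ (by positivity)]
      have h2 : d x u + d x v ≤ 2 * max (d x u) (d x v) := by
        rw [two_mul]; exact add_le_add (le_max_left _ _) (le_max_right _ _)
      have := le_trans hsum h2
      rw [div_le_iff₀ hK₁0] at this
      calc sdiam d B - ε ≤ 2 * max (d x u) (d x v) * K₁ := this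
        _ = max (d x u) (d x v) * (2 * K₁) := by ring
    -- pick b to be the farther of u, v
    obtain ⟨b, hbB, hxb⟩ : ∃ b ∈ B, (sdiam d B - ε) / (2 * K₁) ≤ d x b := by
      rcases le_total (d x u) (d x v) with h | h
      · exact ⟨v, hv, by rwa [max_eq_right h] at hmax⟩
      · exact ⟨u, hu, by rwa [max_eq_left h] at hmax⟩
    have hxa : d x a ≤ t * d x b := by
      have h1 : d x a ≤ sdiam d A := by
        rw [hDA]; exact le_csSup hSAbdd ⟨x, hx, a, ha, rfl⟩
      have h2 : t * ((sdiam d B - ε) / (2 * K₁)) = sdiam d A := by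
        rw [htdef]; field_simp
      calc d x a ≤ sdiam d A := h1
        _ = t * ((sdiam d B - ε) / (2 * K₁)) := h2.symm
        _ ≤ t * d x b := mul_le_mul_of_nonneg_left hxb ht0
    calc ρ (f x) (f a) ≤ η t * ρ (f x) (f b) := hqs x a b t ht0 hxa
      _ ≤ η t * sdiam ρ (f '' B) := mul_le_mul_of_nonneg_left (hρB x (hAB hx) b hbB) hηt0
  -- pass to the limit ε → 0⁺
  set t0 := 2 * K₁ * sdiam d A / sdiam d B with ht0def
  have ht0nn : 0 ≤ t0 := div_nonneg (by positivity) hDBpos.le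
  have hT : Filter.Tendsto (fun ε : ℝ => 2 * K₁ * sdiam d A / (sdiam d B - ε))
      (nhdsWithin 0 (Set.Ioi 0)) (nhds t0) := by
    have hc : ContinuousAt (fun ε : ℝ => 2 * K₁ * sdiam d A / (sdiam d B - ε)) 0 := by
      refine ContinuousAt.div continuousAt_const (continuousAt_const.sub continuousAt_id) ?_
      simpa using hDBpos.ne'
    have h := hc.tendsto.mono_left (nhdsWithin_le_nhds (s := Set.Ioi 0))
    simpa using h
  have hIoo : Set.Ioo (0:ℝ) (sdiam d B) ∈ nhdsWithin (0:ℝ) (Set.Ioi 0) :=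
    Ioo_mem_nhdsGT_of_mem ⟨le_rfl, hDBpos⟩
  have hTw : Filter.Tendsto (fun ε : ℝ => 2 * K₁ * sdiam d A / (sdiam d B - ε))
      (nhdsWithin 0 (Set.Ioi 0)) (nhdsWithin t0 (Set.Ici 0)) := by
    rw [tendsto_nhdsWithin_iff]
    refine ⟨hT, Filter.eventually_of_mem hIoo fun ε hε => ?_⟩
    exact Set.mem_Ici.mpr (div_nonneg (by positivity) (sub_pos.mpr hε.2).le)
  have htendη : Filter.Tendsto
      (fun ε : ℝ => η (2 * K₁ * sdiam d A / (sdiam d B - ε)) * sdiam ρ (f '' B))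
      (nhdsWithin 0 (Set.Ioi 0)) (nhds (η t0 * sdiam ρ (f '' B))) :=
    (((hηcont t0 (Set.mem_Ici.mpr ht0nn)).tendsto.comp hTw).mul_const _)
  exact ge_of_tendsto htendη (Filter.eventually_of_mem hIoo fun ε hε => hkey ε hε)
end

section
/- Let (X,d) and (Y,ρ) be b-metric spaces with coefficients K₁ ≥ 1 and K₂ ≥ 1 respectively, and let f : X → Y be an injective η-quasisymmetry, where η : [0,∞) → [0,∞) is an increasing homeomorphism. Then for every two subsets A ⊆ B of X with 0 < diam A and diam B < ∞, setting t = diam A / diam B, the inequality 2·K₂·η(2·K₁·t)·η(1/t) ≥ 1 holds. -/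
/-- A functional inequality for an `η`-quasisymmetry between b-metric spaces:
with `t = diam A / diam B`, one has `2 K₂ η(2 K₁ t) η(1/t) ≥ 1`. -/
theorem quasisymmetry_functional_inequality {X Y : Type*}
    (K₁ K₂ : ℝ) (hK₁ : 1 ≤ K₁) (hK₂ : 1 ≤ K₂)
    (d : X → X → ℝ) (ρ : Y → Y → ℝ) (η : ℝ → ℝ) (f : X → Y)
    (hd : IsBMetric K₁ d) (hρ : IsBMetric K₂ ρ)
    (hη : IsIncrHomeo η) (hf : Function.Injective f)
    (hqs : IsQuasisymmetry d ρ η f)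
    (A B : Set X) (hAB : A ⊆ B)
    (hA : 0 < sdiam d A) (hB : SBounded d B) :
    1 ≤ 2 * K₂ * η (2 * K₁ * (sdiam d A / sdiam d B)) *
      η (1 / (sdiam d A / sdiam d B)) := by
  obtain ⟨⟨hdnn, hdsymm, hdeq⟩, hdtri⟩ := hd
  obtain ⟨⟨hρnn, hρsymm, hρeq⟩, _⟩ := hρ
  obtain ⟨hη0, hηmono, hηcont, hηmaps, _⟩ := hη
  set SA := {r | ∃ x ∈ A, ∃ y ∈ A, r = d x y} with hSAdef
  set SB := {r | ∃ x ∈ B, ∃ y ∈ B, r = d x y} with hSBdef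
  have hSAB : SA ⊆ SB := by
    rintro r ⟨x, hx, y, hy, rfl⟩
    exact ⟨x, hAB hx, y, hAB hy, rfl⟩
  have hbddA : BddAbove SA := hB.mono hSAB
  have hSAne : SA.Nonempty := by
    by_contra h
    rw [Set.not_nonempty_iff_eq_empty] at h
    rw [sdiam, ← hSAdef, h, Real.sSup_empty] at hA
    exact lt_irrefl 0 hA
  set sA := sdiam d A with hsA
  set sB := sdiam d B with hsB
  have hAleB : sA ≤ sB := csSup_le_csSup hB hSAne hSAB
  have hBpos : 0 < sB := lt_of_lt_of_le hA hAleB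
  set t0 := sA / sB with ht0
  have ht0pos : 0 < t0 := div_pos hA hBpos
  have hK₁pos : (0:ℝ) < K₁ := lt_of_lt_of_le one_pos hK₁
  have hηnn : ∀ r : ℝ, 0 ≤ r → 0 ≤ η r := fun r hr => hηmaps hr
  -- main claim: for every s > 1, 1 ≤ η (2 K₁ t₀ s) * η (s / t₀)
  have main : ∀ s : ℝ, 1 < s → 1 ≤ η (2 * K₁ * t0 * s) * η (s / t0) := by
    intro s hs
    have hspos : (0:ℝ) < s := lt_trans one_pos hs
    -- pick a, b ∈ A with d a b > sA / s
    obtain ⟨r, hrSA, hr⟩ := exists_lt_of_lt_csSup hSAne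
      (show sA / s < sA from div_lt_self hA hs)
    obtain ⟨a, ha, b, hb, rfl⟩ := hrSA
    -- pick u, v ∈ B with d u v > sB / s
    have hSBne : SB.Nonempty := hSAne.mono hSAB
    obtain ⟨r', hrSB, hr'⟩ := exists_lt_of_lt_csSup hSBne
      (show sB / s < sB from div_lt_self hBpos hs)
    obtain ⟨u, hu, v, hv, rfl⟩ := hrSB
    -- choose w ∈ B with sB / s < 2 K₁ * d a w
    obtain ⟨w, hw, hdw⟩ : ∃ w ∈ B, sB / s < 2 * K₁ * d a w := by
      rcases le_total (d a v) (d a u) with h | h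
      · refine ⟨u, hu, ?_⟩
        have := hdtri u v a
        have h1 : d u a = d a u := hdsymm u a
        nlinarith
      · refine ⟨v, hv, ?_⟩
        have := hdtri u v a
        have h1 : d u a = d a u := hdsymm u a
        nlinarith
    have hab_pos : 0 < d a b := lt_of_le_of_lt (by positivity) hr
    have hab_le : d a b ≤ sA := le_csSup hbddA ⟨a, ha, b, hb, rfl⟩
    have haw_le : d a w ≤ sB := le_csSup hB ⟨a, hAB ha, w, hw, rfl⟩
    have haw_pos : 0 < d a w := by nlinarith [div_pos hBpos hspos]
    -- first quasisymmetry application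
    have hsAsB : sA = t0 * sB := by rw [ht0]; field_simp
    have h1arg : (0:ℝ) ≤ 2 * K₁ * t0 * s := by positivity
    have h1 : ρ (f a) (f b) ≤ η (2 * K₁ * t0 * s) * ρ (f a) (f w) := by
      apply hqs a b w _ h1arg
      have hsBlt : sB < s * (2 * K₁ * d a w) := by
        rw [div_lt_iff₀ hspos] at hdw; nlinarith
      calc d a b ≤ sA := hab_le
        _ = t0 * sB := hsAsB
        _ ≤ t0 * (s * (2 * K₁ * d a w)) := by nlinarith
        _ = 2 * K₁ * t0 * s * d a w := by ring
    -- second quasisymmetry application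
    have h2arg : (0:ℝ) ≤ s / t0 := by positivity
    have h2 : ρ (f a) (f w) ≤ η (s / t0) * ρ (f a) (f b) := by
      apply hqs a w b _ h2arg
      have hsAlt : sA < s * d a b := by
        rw [div_lt_iff₀ hspos] at hr; nlinarith
      have hsBeq : sB = sA / t0 := by rw [ht0]; field_simp
      calc d a w ≤ sB := haw_le
        _ = sA / t0 := hsBeq
        _ ≤ (s * d a b) / t0 := by
            gcongr
        _ = s / t0 * d a b := by ring
    -- positivity of ρ (f a) (f b)
    have hne : a ≠ b := fun h => by simp [h, (hdeq b b).mpr rfl] at hab_pos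
    have hρab_pos : 0 < ρ (f a) (f b) := by
      rcases lt_or_eq_of_le (hρnn (f a) (f b)) with h | h
      · exact h
      · exact absurd (hf ((hρeq (f a) (f b)).mp h.symm)) hne
    have hη1 : 0 ≤ η (2 * K₁ * t0 * s) := hηnn _ h1arg
    have chain : ρ (f a) (f b) ≤
        η (2 * K₁ * t0 * s) * (η (s / t0) * ρ (f a) (f b)) := by
      calc ρ (f a) (f b) ≤ η (2 * K₁ * t0 * s) * ρ (f a) (f w) := h1
        _ ≤ η (2 * K₁ * t0 * s) * (η (s / t0) * ρ (f a) (f b)) :=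
            mul_le_mul_of_nonneg_left h2 hη1
    nlinarith
  -- pass to the limit s → 1⁺
  have key : 1 ≤ η (2 * K₁ * t0) * η (1 / t0) := by
    have hmem1 : (2 * K₁ * t0) ∈ Set.Ici (0:ℝ) := by
      simp only [Set.mem_Ici]; positivity
    have hmem2 : (1 / t0) ∈ Set.Ici (0:ℝ) := by
      simp only [Set.mem_Ici]; positivity
    have inner1 : Filter.Tendsto (fun s : ℝ => 2 * K₁ * t0 * s)
        (nhdsWithin 1 (Set.Ioi 1)) (nhdsWithin (2 * K₁ * t0) (Set.Ici 0)) := by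
      apply tendsto_nhdsWithin_of_tendsto_nhds_of_eventually_within
      · have : Filter.Tendsto (fun s : ℝ => 2 * K₁ * t0 * s) (nhds 1)
            (nhds (2 * K₁ * t0 * 1)) := (continuous_const.mul continuous_id).tendsto 1
        rw [mul_one] at this
        exact this.mono_left nhdsWithin_le_nhds
      · filter_upwards [self_mem_nhdsWithin] with s hs
        have : (1:ℝ) < s := hs
        have : (0:ℝ) ≤ 2 * K₁ * t0 * s := by positivity
        simpa using this
    have inner2 : Filter.Tendsto (fun s : ℝ => s / t0)
        (nhdsWithin 1 (Set.Ioi 1)) (nhdsWithin (1 / t0) (Set.Ici 0)) := by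
      apply tendsto_nhdsWithin_of_tendsto_nhds_of_eventually_within
      · have : Filter.Tendsto (fun s : ℝ => s / t0) (nhds 1)
            (nhds (1 / t0)) := (continuous_id.div_const t0).tendsto 1
        exact this.mono_left nhdsWithin_le_nhds
      · filter_upwards [self_mem_nhdsWithin] with s hs
        have h1 : (1:ℝ) < s := hs
        have : (0:ℝ) ≤ s / t0 := by positivity
        simpa using this
    have hc1 : Filter.Tendsto (fun s : ℝ => η (2 * K₁ * t0 * s))
        (nhdsWithin 1 (Set.Ioi 1)) (nhds (η (2 * K₁ * t0))) :=
      (hηcont _ hmem1).tendsto.comp inner1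
    have hc2 : Filter.Tendsto (fun s : ℝ => η (s / t0))
        (nhdsWithin 1 (Set.Ioi 1)) (nhds (η (1 / t0))) :=
      (hηcont _ hmem2).tendsto.comp inner2
    refine ge_of_tendsto (hc1.mul hc2) ?_
    filter_upwards [self_mem_nhdsWithin] with s hs
    exact main s hs
  have hP : 0 ≤ η (2 * K₁ * t0) := hηnn _ (by positivity)
  have hQ : 0 ≤ η (1 / t0) := hηnn _ (by positivity)
  nlinarith
end

section
/- Let X and Y be metric spaces and let f : X → Y be an injective η-quasisymmetry, where η : [0,∞) → [0,∞) is an increasing homeomorphism. If A ⊆ B ⊆ X with 0 < diam A and diam B < ∞, then diam f(B) < ∞ and the double inequality 1/(2·η(diam B / diam A)) ≤ diam f(A) / diam f(B) ≤ η(2·diam A / diam B) holds. -/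
/-- The Tukia–Väisälä inequality for quasisymmetries between metric spaces. -/
theorem tukia_vaisala_inequality {X Y : Type*} [MetricSpace X] [MetricSpace Y]
    (η : ℝ → ℝ) (f : X → Y) (hη : IsIncrHomeo η) (hf : Function.Injective f)
    (hqs : ∀ x a b : X, ∀ t : ℝ, 0 ≤ t → dist x a ≤ t * dist x b →
      dist (f x) (f a) ≤ η t * dist (f x) (f b))
    (A B : Set X) (hAB : A ⊆ B)
    (hA : 0 < Metric.diam A) (hB : EMetric.diam B < ⊤) :
    EMetric.diam (f '' B) < ⊤ ∧
      1 / (2 * η (Metric.diam B / Metric.diam A)) ≤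
        Metric.diam (f '' A) / Metric.diam (f '' B) ∧
      Metric.diam (f '' A) / Metric.diam (f '' B) ≤
        η (2 * Metric.diam A / Metric.diam B) := by
  obtain ⟨hη0, hηmono, hηcont, hηmaps, -⟩ := hη
  have hBbd : Bornology.IsBounded B := Metric.isBounded_iff_ediam_ne_top.mpr hB.ne
  set dA := Metric.diam A with hdA
  set dB := Metric.diam B with hdB
  have hdAB : dA ≤ dB := Metric.diam_mono hAB hBbd
  have hdBpos : 0 < dB := lt_of_lt_of_le hA hdAB
  set s : ℝ := dB / dA with hs
  set t : ℝ := 2 * dA / dB with ht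
  have hs0 : 0 < s := div_pos hdBpos hA
  have ht0 : 0 < t := div_pos (by linarith) hdBpos
  have hηnn : ∀ u : ℝ, 0 ≤ u → 0 ≤ η u := fun u hu => hηmaps hu
  -- key pointwise estimate for the lower bound
  have key1 : ∀ s' : ℝ, s < s' → ∃ a ∈ A, ∃ x ∈ A, dB / s' < dist a x ∧
      ∀ b ∈ B, dist (f a) (f b) ≤ η s' * dist (f a) (f x) := by
    intro s' hs'
    have hs'pos : 0 < s' := lt_trans hs0 hs'
    have hpt : ∃ a ∈ A, ∃ x ∈ A, dB / s' < dist a x := by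
      by_contra h
      push_neg at h
      have hle : dA ≤ dB / s' :=
        Metric.diam_le_of_forall_dist_le (div_nonneg hdBpos.le hs'pos.le) h
      have : dB / s' < dA := by
        rw [div_lt_iff₀ hs'pos]
        have := (div_lt_iff₀ hA).mp hs'
        nlinarith
      linarith
    obtain ⟨a, haA, x, hxA, hax⟩ := hpt
    refine ⟨a, haA, x, hxA, hax, fun b hb => ?_⟩
    have h1 : dist a b ≤ s' * dist a x := by
      have hb' : dist a b ≤ dB := Metric.dist_le_diam_of_mem hBbd (hAB haA) hb
      have := (div_lt_iff₀ hs'pos).mp hax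
      nlinarith
    exact hqs a b x s' hs'pos.le h1
  -- boundedness of f '' B
  obtain ⟨a₀, ha₀A, x₀, hx₀A, hax₀, hbd₀⟩ := key1 (s + 1) (by linarith)
  set C : ℝ := 2 * (η (s + 1) * dist (f a₀) (f x₀)) with hC
  have hCnn : 0 ≤ C := by
    have := hηnn (s + 1) (by linarith)
    positivity
  have hdistC : ∀ u ∈ f '' B, ∀ v ∈ f '' B, dist u v ≤ C := by
    rintro u ⟨b, hb, rfl⟩ v ⟨c, hc, rfl⟩
    have h1 := hbd₀ b hb
    have h2 := hbd₀ c hc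
    have h3 : dist (f b) (f c) ≤ dist (f a₀) (f b) + dist (f a₀) (f c) := by
      rw [dist_comm (f a₀) (f b)]; exact dist_triangle _ _ _
    rw [hC]; linarith
  have hfBbd : Bornology.IsBounded (f '' B) := Metric.isBounded_iff.mpr ⟨C, by
    intro u hu v hv; exact hdistC u hu v hv⟩
  have hfAbd : Bornology.IsBounded (f '' A) := hfBbd.subset (Set.image_mono hAB)
  have hTop : EMetric.diam (f '' B) < ⊤ :=
    lt_top_iff_ne_top.mpr (Metric.isBounded_iff_ediam_ne_top.mp hfBbd)
  -- positivity of diam (f '' A)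
  have hfApos : 0 < Metric.diam (f '' A) := by
    have hxne : a₀ ≠ x₀ := by
      intro h
      rw [h, dist_self] at hax₀
      have : (0:ℝ) ≤ dB / (s + 1) := div_nonneg hdBpos.le (by linarith)
      linarith
    have : 0 < dist (f a₀) (f x₀) := dist_pos.mpr (fun h => hxne (hf h))
    exact lt_of_lt_of_le this (Metric.dist_le_diam_of_mem hfAbd
      ⟨a₀, ha₀A, rfl⟩ ⟨x₀, hx₀A, rfl⟩)
  have hfBpos : 0 < Metric.diam (f '' B) :=
    lt_of_lt_of_le hfApos (Metric.diam_mono (Set.image_mono hAB) hfBbd)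
  -- lower estimate for every s' > s
  have ineq1 : ∀ s' : ℝ, s < s' →
      Metric.diam (f '' B) ≤ 2 * η s' * Metric.diam (f '' A) := by
    intro s' hs'
    obtain ⟨a, haA, x, hxA, hax, hbd⟩ := key1 s' hs'
    have hηnn' : 0 ≤ η s' := hηnn s' (le_of_lt (lt_trans hs0 hs'))
    have hfx : dist (f a) (f x) ≤ Metric.diam (f '' A) :=
      Metric.dist_le_diam_of_mem hfAbd ⟨a, haA, rfl⟩ ⟨x, hxA, rfl⟩
    refine Metric.diam_le_of_forall_dist_le (by positivity) ?_
    rintro u ⟨b, hb, rfl⟩ v ⟨c, hc, rfl⟩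
    have h1 := hbd b hb
    have h2 := hbd c hc
    have h3 : dist (f b) (f c) ≤ dist (f a) (f b) + dist (f a) (f c) := by
      rw [dist_comm (f a) (f b)]; exact dist_triangle _ _ _
    nlinarith
  -- upper estimate for every t' > t
  have ineq2 : ∀ t' : ℝ, t < t' →
      Metric.diam (f '' A) ≤ η t' * Metric.diam (f '' B) := by
    intro t' ht'
    have ht'pos : 0 < t' := lt_trans ht0 ht'
    have hpt : ∃ x ∈ B, ∃ y ∈ B, 2 * dA / t' < dist x y := by
      by_contra h
      push_neg at h
      have hle : dB ≤ 2 * dA / t' :=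
        Metric.diam_le_of_forall_dist_le (by positivity) h
      have : 2 * dA / t' < dB := by
        rw [div_lt_iff₀ ht'pos]
        have := (div_lt_iff₀ hdBpos).mp ht'
        nlinarith
      linarith
    obtain ⟨x, hxB, y, hyB, hxy⟩ := hpt
    refine Metric.diam_le_of_forall_dist_le
      (mul_nonneg (hηnn t' ht'pos.le) Metric.diam_nonneg) ?_
    rintro u ⟨a, ha, rfl⟩ v ⟨b, hb, rfl⟩
    have habA : dist a b ≤ dA := Metric.dist_le_diam_of_mem
      (hBbd.subset hAB) ha hb
    have htri : dist x y ≤ dist a x + dist a y := by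
      rw [dist_comm a x]; exact dist_triangle _ _ _
    rcases le_total (dist a x) (dist a y) with hcase | hcase
    · have h1 : dist a b ≤ t' * dist a y := by
        have := (div_lt_iff₀ ht'pos).mp hxy
        nlinarith
      have h2 := hqs a b y t' ht'pos.le h1
      have h3 : dist (f a) (f y) ≤ Metric.diam (f '' B) :=
        Metric.dist_le_diam_of_mem hfBbd ⟨a, hAB ha, rfl⟩ ⟨y, hyB, rfl⟩
      have := hηnn t' ht'pos.le
      nlinarith
    · have h1 : dist a b ≤ t' * dist a x := by
        have := (div_lt_iff₀ ht'pos).mp hxy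
        nlinarith
      have h2 := hqs a b x t' ht'pos.le h1
      have h3 : dist (f a) (f x) ≤ Metric.diam (f '' B) :=
        Metric.dist_le_diam_of_mem hfBbd ⟨a, hAB ha, rfl⟩ ⟨x, hxB, rfl⟩
      have := hηnn t' ht'pos.le
      nlinarith
  -- pass to the limit using continuity of η
  have hlim : ∀ u : ℝ, 0 ≤ u → Filter.Tendsto η (nhdsWithin u (Set.Ioi u)) (nhds (η u)) := by
    intro u hu
    exact (hηcont u hu).mono (fun v hv => le_of_lt (lt_of_le_of_lt hu hv))
  have h1 : Metric.diam (f '' B) ≤ 2 * η s * Metric.diam (f '' A) := by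
    have htend : Filter.Tendsto (fun s' => 2 * η s' * Metric.diam (f '' A))
        (nhdsWithin s (Set.Ioi s)) (nhds (2 * η s * Metric.diam (f '' A))) :=
      (((hlim s hs0.le).const_mul 2).mul_const _)
    refine ge_of_tendsto htend ?_
    filter_upwards [self_mem_nhdsWithin] with s' hs'
    exact ineq1 s' hs'
  have h2 : Metric.diam (f '' A) ≤ η t * Metric.diam (f '' B) := by
    have htend : Filter.Tendsto (fun t' => η t' * Metric.diam (f '' B))
        (nhdsWithin t (Set.Ioi t)) (nhds (η t * Metric.diam (f '' B))) :=
      ((hlim t ht0.le).mul_const _)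
    refine ge_of_tendsto htend ?_
    filter_upwards [self_mem_nhdsWithin] with t' ht'
    exact ineq2 t' ht'
  have hηs : 0 < η s := by
    have := hηmono (Set.self_mem_Ici) (le_of_lt hs0 : (0:ℝ) ≤ s) hs0
    rw [hη0] at this; exact this
  refine ⟨hTop, ?_, ?_⟩
  · rw [div_le_div_iff₀ (by positivity) hfBpos]
    nlinarith
  · rw [div_le_iff₀ hfBpos]
    exact h2
end

section
/- Let (X,d) be a b-metric space with coefficient K₁ ≥ 1, let (Y,ρ) be a semimetric space, and let f : X → Y be a bijective η-quasisymmetry, where η : [0,∞) → [0,∞) is an increasing homeomorphism. Suppose there exists K₂ ≥ 1 such that for all t₁, t₂ > 0: if 1 ≤ K₁(1/t₁ + 1/t₂) then 1 ≤ K₂(1/η(t₁) + 1/η(t₂)). Then ρ is a b-metric on Y with coefficient K₂, i.e. ρ(x',y') ≤ K₂(ρ(x',z') + ρ(z',y')) for all x',y',z' ∈ Y. -/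
/-- If a surjective `η`-quasisymmetry from a b-metric space satisfies the functional
condition `1 ≤ K₁(1/t₁ + 1/t₂) ⟹ 1 ≤ K₂(1/η(t₁) + 1/η(t₂))`, then the target
semimetric is a b-metric with coefficient `K₂`. -/
theorem quasisymmetry_preserves_bmetric {X Y : Type*}
    (K₁ K₂ : ℝ) (hK₁ : 1 ≤ K₁) (hK₂ : 1 ≤ K₂)
    (d : X → X → ℝ) (ρ : Y → Y → ℝ) (η : ℝ → ℝ) (f : X → Y)
    (hd : IsBMetric K₁ d) (hρ : IsSemimetric ρ)
    (hη : IsIncrHomeo η) (hf : Function.Bijective f)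
    (hqs : IsQuasisymmetry d ρ η f)
    (hcond : ∀ t₁ t₂ : ℝ, 0 < t₁ → 0 < t₂ →
      1 ≤ K₁ * (1 / t₁ + 1 / t₂) → 1 ≤ K₂ * (1 / η t₁ + 1 / η t₂)) :
    ∀ x' y' z' : Y, ρ x' y' ≤ K₂ * (ρ x' z' + ρ z' y') := by
  obtain ⟨⟨hd0, hdsymm, hdeq⟩, hdtri⟩ := hd
  obtain ⟨hρ0, hρsymm, hρeq⟩ := hρ
  obtain ⟨hη0, hηmono, _, _, _⟩ := hη
  intro x' y' z'
  obtain ⟨x, rfl⟩ := hf.2 x'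
  obtain ⟨y, rfl⟩ := hf.2 y'
  obtain ⟨z, rfl⟩ := hf.2 z'
  by_cases hxy : x = y
  · subst hxy
    have h1 : ρ (f x) (f x) = 0 := (hρeq _ _).2 rfl
    rw [h1]
    have := hρ0 (f x) (f z); have := hρ0 (f z) (f x)
    nlinarith
  by_cases hxz : x = z
  · subst hxz
    have h1 : ρ (f x) (f x) = 0 := (hρeq _ _).2 rfl
    have := hρ0 (f x) (f y)
    nlinarith
  by_cases hzy : z = y
  · subst hzy
    have h1 : ρ (f z) (f z) = 0 := (hρeq _ _).2 rfl
    have := hρ0 (f x) (f z)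
    nlinarith
  -- main case
  have hdxy : 0 < d x y := lt_of_le_of_ne (hd0 x y) (fun h => hxy ((hdeq x y).1 h.symm))
  have hdxz : 0 < d x z := lt_of_le_of_ne (hd0 x z) (fun h => hxz ((hdeq x z).1 h.symm))
  have hdzy : 0 < d z y := lt_of_le_of_ne (hd0 z y) (fun h => hzy ((hdeq z y).1 h.symm))
  set t₁ : ℝ := d x y / d x z with ht₁
  set t₂ : ℝ := d x y / d z y with ht₂
  have ht₁0 : 0 < t₁ := div_pos hdxy hdxz
  have ht₂0 : 0 < t₂ := div_pos hdxy hdzy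
  have hηt₁ : 0 < η t₁ := by
    have := hηmono (Set.mem_Ici.2 le_rfl) (Set.mem_Ici.2 ht₁0.le) ht₁0
    linarith [hη0 ▸ this]
  have hηt₂ : 0 < η t₂ := by
    have := hηmono (Set.mem_Ici.2 le_rfl) (Set.mem_Ici.2 ht₂0.le) ht₂0
    linarith [hη0 ▸ this]
  have hc : 1 ≤ K₂ * (1 / η t₁ + 1 / η t₂) := by
    apply hcond t₁ t₂ ht₁0 ht₂0
    have h1 : 1 / t₁ = d x z / d x y := by rw [ht₁, one_div_div]
    have h2 : 1 / t₂ = d z y / d x y := by rw [ht₂, one_div_div]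
    rw [h1, h2, ← add_div, ← mul_div_assoc, le_div_iff₀ hdxy, one_mul]
    exact hdtri x y z
  have hq1 : ρ (f x) (f y) ≤ η t₁ * ρ (f x) (f z) := by
    apply hqs x y z t₁ ht₁0.le
    rw [ht₁, div_mul_eq_mul_div, le_div_iff₀ hdxz]
  have hq2 : ρ (f y) (f x) ≤ η t₂ * ρ (f y) (f z) := by
    apply hqs y x z t₂ ht₂0.le
    rw [ht₂, div_mul_eq_mul_div, le_div_iff₀ hdzy, hdsymm y x, hdsymm y z, hdsymm z y]
  rw [hρsymm (f y) (f x), hρsymm (f y) (f z)] at hq2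
  have h1 : ρ (f x) (f y) / η t₁ ≤ ρ (f x) (f z) := (div_le_iff₀ hηt₁).2 (by linarith [mul_comm (η t₁) (ρ (f x) (f z))])
  have h2 : ρ (f x) (f y) / η t₂ ≤ ρ (f z) (f y) := (div_le_iff₀ hηt₂).2 (by linarith [mul_comm (η t₂) (ρ (f z) (f y))])
  have key : ρ (f x) (f y) ≤ K₂ * (ρ (f x) (f y) / η t₁ + ρ (f x) (f y) / η t₂) := by
    have hρnn := hρ0 (f x) (f y)
    calc ρ (f x) (f y) = ρ (f x) (f y) * 1 := (mul_one _).symm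
    _ ≤ ρ (f x) (f y) * (K₂ * (1 / η t₁ + 1 / η t₂)) := by
        apply mul_le_mul_of_nonneg_left hc hρnn
    _ = K₂ * (ρ (f x) (f y) / η t₁ + ρ (f x) (f y) / η t₂) := by ring
  have : K₂ * (ρ (f x) (f y) / η t₁ + ρ (f x) (f y) / η t₂) ≤ K₂ * (ρ (f x) (f z) + ρ (f z) (f y)) := by
    apply mul_le_mul_of_nonneg_left (by linarith) (by linarith)
  linarith
end

section
/- Let (X,d) be a b-metric space with coefficient K₁ ≥ 1, let (Y,ρ) be a semimetric space, and let f : X → Y be a bijective η-quasisymmetry, where η : [0,∞) → [0,∞) is an increasing homeomorphism satisfying: (i) η(u)·η(v) ≤ η(u·v) for all u,v ≥ 0; (ii) η is subadditive, i.e. η(u+v) ≤ η(u) + η(v) for all u,v ≥ 0; (iii) η(K₁·t) ≤ K₂·η(t) for some K₂ ≥ 1 and all t ≥ 0. Then ρ is a b-metric on Y with coefficient K₂, i.e. ρ(x',y') ≤ K₂(ρ(x',z') + ρ(z',y')) for all x',y',z' ∈ Y. -/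
/-- If a surjective `η`-quasisymmetry from a b-metric space has `η` supermultiplicative,
subadditive, and satisfying `η(K₁ t) ≤ K₂ η(t)`, then the target semimetric is a
b-metric with coefficient `K₂`. -/
theorem quasisymmetry_preserves_bmetric_of_submult {X Y : Type*}
    (K₁ K₂ : ℝ) (hK₁ : 1 ≤ K₁) (hK₂ : 1 ≤ K₂)
    (d : X → X → ℝ) (ρ : Y → Y → ℝ) (η : ℝ → ℝ) (f : X → Y)
    (hd : IsBMetric K₁ d) (hρ : IsSemimetric ρ)
    (hη : IsIncrHomeo η) (hf : Function.Bijective f)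
    (hqs : IsQuasisymmetry d ρ η f)
    (hi : ∀ u v : ℝ, 0 ≤ u → 0 ≤ v → η u * η v ≤ η (u * v))
    (hii : ∀ u v : ℝ, 0 ≤ u → 0 ≤ v → η (u + v) ≤ η u + η v)
    (hiii : ∀ t : ℝ, 0 ≤ t → η (K₁ * t) ≤ K₂ * η t) :
    ∀ x' y' z' : Y, ρ x' y' ≤ K₂ * (ρ x' z' + ρ z' y') := by
  obtain ⟨⟨dnn, dsymm, dzero⟩, dtri⟩ := hd
  obtain ⟨ρnn, ρsymm, ρzero⟩ := hρ
  obtain ⟨hη0, hηmono, _, hηmaps, _⟩ := hη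
  have hηnn : ∀ t : ℝ, 0 ≤ t → 0 ≤ η t := fun t ht => hηmaps ht
  have hη1pos : 0 < η 1 := by
    have := hηmono (Set.mem_Ici.mpr le_rfl) (Set.mem_Ici.mpr zero_le_one) zero_lt_one
    linarith [hη0]
  have hη1 : η 1 ≤ 1 := by
    have h := hi 1 1 zero_le_one zero_le_one
    rw [one_mul] at h
    nlinarith
  have key : ∀ x y z : X, d z x ≤ d z y →
      ρ (f x) (f y) ≤ K₂ * (ρ (f x) (f z) + ρ (f z) (f y)) := by
    intro x y z hle
    by_cases hzx : d z x = 0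
    · have hzx' : z = x := (dzero z x).mp hzx
      subst hzx'
      have : ρ (f z) (f z) = 0 := (ρzero _ _).mpr rfl
      rw [this]
      nlinarith [ρnn (f z) (f y)]
    by_cases hzy : d z y = 0
    · have hzy' : z = y := (dzero z y).mp hzy
      subst hzy'
      have : ρ (f z) (f z) = 0 := (ρzero _ _).mpr rfl
      rw [this]
      nlinarith [ρnn (f x) (f z)]
    have hdzx : 0 < d z x := lt_of_le_of_ne (dnn z x) (Ne.symm hzx)
    have hdzy : 0 < d z y := lt_of_le_of_ne (dnn z y) (Ne.symm hzy)
    set t : ℝ := d z x / d z y with ht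
    have ht0 : 0 < t := div_pos hdzx hdzy
    have ht1 : t ≤ 1 := (div_le_one hdzy).mpr hle
    have hteq : t * d z y = d z x := div_mul_cancel₀ _ hdzy.ne'
    -- η t * ρ (f z) (f y) ≤ ρ (f z) (f x)
    have h1 : ρ (f z) (f y) ≤ η (1 / t) * ρ (f z) (f x) := by
      apply hqs z y x (1 / t) (by positivity)
      have heq : (1 / t) * d z x = d z y := by
        rw [← hteq, ← mul_assoc, one_div_mul_cancel ht0.ne', one_mul]
      rw [heq]
    have h2 : η t * ρ (f z) (f y) ≤ ρ (f z) (f x) := by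
      have hmul : η t * η (1 / t) ≤ η 1 := by
        have := hi t (1 / t) ht0.le (by positivity)
        rwa [mul_one_div_cancel ht0.ne'] at this
      calc η t * ρ (f z) (f y) ≤ η t * (η (1 / t) * ρ (f z) (f x)) := by
            exact mul_le_mul_of_nonneg_left h1 (hηnn t ht0.le)
        _ = η t * η (1 / t) * ρ (f z) (f x) := by ring
        _ ≤ η 1 * ρ (f z) (f x) := mul_le_mul_of_nonneg_right hmul (ρnn _ _)
        _ ≤ ρ (f z) (f x) := by nlinarith [ρnn (f z) (f x)]
    -- ρ (f y) (f x) ≤ η (K₁ * (1 + t)) * ρ (f y) (f z)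
    have h3 : d y x ≤ (K₁ * (1 + t)) * d y z := by
      calc d y x ≤ K₁ * (d y z + d z x) := dtri y x z
        _ = K₁ * (d y z + t * d z y) := by rw [hteq]
        _ = (K₁ * (1 + t)) * d y z := by rw [dsymm z y]; ring
    have h4 : ρ (f y) (f x) ≤ η (K₁ * (1 + t)) * ρ (f y) (f z) :=
      hqs y x z _ (by nlinarith) h3
    have h5 : η (K₁ * (1 + t)) ≤ K₂ * (1 + η t) := by
      calc η (K₁ * (1 + t)) ≤ K₂ * η (1 + t) := hiii _ (by linarith)
        _ ≤ K₂ * (η 1 + η t) := by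
            have := hii 1 t zero_le_one ht0.le
            nlinarith
        _ ≤ K₂ * (1 + η t) := by nlinarith [hηnn t ht0.le]
    have h6 : ρ (f y) (f x) ≤ K₂ * (1 + η t) * ρ (f y) (f z) :=
      h4.trans (mul_le_mul_of_nonneg_right h5 (ρnn _ _))
    rw [ρsymm (f x) (f y), ρsymm (f x) (f z), ρsymm (f z) (f y)]
    calc ρ (f y) (f x) ≤ K₂ * (1 + η t) * ρ (f y) (f z) := h6
      _ = K₂ * (η t * ρ (f y) (f z) + ρ (f y) (f z)) := by ring
      _ ≤ K₂ * (ρ (f z) (f x) + ρ (f y) (f z)) := by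
          have : η t * ρ (f y) (f z) ≤ ρ (f z) (f x) := by
            rw [ρsymm (f y) (f z)]; exact h2
          nlinarith
  intro x' y' z'
  obtain ⟨x, rfl⟩ := hf.2 x'
  obtain ⟨y, rfl⟩ := hf.2 y'
  obtain ⟨z, rfl⟩ := hf.2 z'
  rcases le_total (d z x) (d z y) with h | h
  · exact key x y z h
  · have := key y x z h
    rw [ρsymm (f y) (f x), ρsymm (f y) (f z), ρsymm (f z) (f x)] at this
    linarith
end

section
/- Let (X,d) be a metric space, let (Y,ρ) be a semimetric space, let 0 < α ≤ 1, and let f : X → Y be a bijective η-quasisymmetry with η(t) = t^α. Then ρ is a metric on Y, i.e. ρ satisfies the triangle inequality ρ(x',y') ≤ ρ(x',z') + ρ(z',y') for all x',y',z' ∈ Y. -/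
lemma real_rpow_add_le {p a b : ℝ} (hp : 0 ≤ p) (hp1 : p ≤ 1) (ha : 0 ≤ a) (hb : 0 ≤ b) :
    (a + b) ^ p ≤ a ^ p + b ^ p := by
  lift a to NNReal using ha
  lift b to NNReal using hb
  have := NNReal.rpow_add_le_add_rpow a b hp hp1
  rw [← NNReal.coe_le_coe] at this
  push_cast at this
  convert this using 2

/-- A surjective `t ↦ t^α`-quasisymmetry (`0 < α ≤ 1`) from a metric space onto a
semimetric space forces the target semimetric to satisfy the triangle inequality. -/
theorem quasisymmetry_rpow_preserves_metric {X Y : Type*}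
    (α : ℝ) (hα₀ : 0 < α) (hα₁ : α ≤ 1)
    (d : X → X → ℝ) (ρ : Y → Y → ℝ) (f : X → Y)
    (hd : IsMetric d) (hρ : IsSemimetric ρ)
    (hf : Function.Bijective f)
    (hqs : IsQuasisymmetry d ρ (fun t => t ^ α) f) :
    ∀ x' y' z' : Y, ρ x' y' ≤ ρ x' z' + ρ z' y' := by

  obtain ⟨⟨hdnn, hdsymm, hdeq⟩, hdtri⟩ := hd
  obtain ⟨hρnn, hρsymm, hρeq⟩ := hρ
  intro x' y' z'
  obtain ⟨x, rfl⟩ := hf.2 x'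
  obtain ⟨y, rfl⟩ := hf.2 y'
  obtain ⟨z, rfl⟩ := hf.2 z'
  by_cases hxy : x = y
  · subst hxy
    have : ρ (f x) (f x) = 0 := (hρeq _ _).2 rfl
    rw [this]
    exact add_nonneg (hρnn _ _) (hρnn _ _)
  by_cases hxz : x = z
  · subst hxz
    have : ρ (f x) (f x) = 0 := (hρeq _ _).2 rfl
    linarith [hρnn (f x) (f y)]
  by_cases hzy : z = y
  · subst hzy
    have : ρ (f z) (f z) = 0 := (hρeq _ _).2 rfl
    linarith [hρnn (f x) (f z)]
  set a := d x z with ha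
  set b := d z y with hb
  set s := d x y with hs
  have hapos : 0 < a := lt_of_le_of_ne (hdnn x z) fun h => hxz ((hdeq x z).1 h.symm)
  have hbpos : 0 < b := lt_of_le_of_ne (hdnn z y) fun h => hzy ((hdeq z y).1 h.symm)
  have hspos : 0 < s := lt_of_le_of_ne (hdnn x y) fun h => hxy ((hdeq x y).1 h.symm)
  set u := ρ (f x) (f z) with hu
  set v := ρ (f z) (f y) with hv
  -- base point x : ρ(x',y') ≤ (s/a)^α u
  have h1 : ρ (f x) (f y) ≤ (s / a) ^ α * u := by
    have := hqs x y z (s / a) (by positivity) (by rw [div_mul_cancel₀ _ hapos.ne'])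
    simpa using this
  -- base point z : u ≤ (a/b)^α v
  have h2 : u ≤ (a / b) ^ α * v := by
    have := hqs z x y (a / b) (by positivity)
      (by rw [div_mul_cancel₀ _ hbpos.ne', hdsymm z x])
    simpa [hρsymm (f z) (f x), ← hu, ← hv] using this
  have hunn : 0 ≤ u := hρnn _ _
  -- hence (b/a)^α u ≤ v
  have h3 : (b / a) ^ α * u ≤ v := by
    have hprod : (b / a) ^ α * (a / b) ^ α = 1 := by
      rw [← Real.mul_rpow (by positivity) (by positivity), div_mul_div_comm,
        show b * a / (a * b) = 1 by rw [mul_comm b a, div_self (by positivity)], Real.one_rpow]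
    calc (b / a) ^ α * u ≤ (b / a) ^ α * ((a / b) ^ α * v) :=
          mul_le_mul_of_nonneg_left h2 (Real.rpow_nonneg (by positivity) α)
      _ = v := by rw [← mul_assoc, hprod, one_mul]
  -- subadditivity: s^α ≤ a^α + b^α
  have hsub : s ^ α ≤ a ^ α + b ^ α := by
    calc s ^ α ≤ (a + b) ^ α :=
          Real.rpow_le_rpow hspos.le (hdtri x y z) hα₀.le
      _ ≤ a ^ α + b ^ α := real_rpow_add_le hα₀.le hα₁ hapos.le hbpos.le
  -- finish
  have key : (s / a) ^ α * u ≤ u + v := by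
    have hapow : (0:ℝ) < a ^ α := Real.rpow_pos_of_pos hapos α
    rw [Real.div_rpow hspos.le hapos.le]
    have hr : s ^ α / a ^ α ≤ 1 + b ^ α / a ^ α := by
      rw [div_le_iff₀ hapow, add_mul, one_mul, div_mul_cancel₀ _ hapow.ne']
      linarith
    calc s ^ α / a ^ α * u ≤ (1 + b ^ α / a ^ α) * u :=
          mul_le_mul_of_nonneg_right hr hunn
      _ = u + (b / a) ^ α * u := by rw [Real.div_rpow hbpos.le hapos.le]; ring
      _ ≤ u + v := by linarith
  exact h1.trans (key.trans (by linarith))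
end

section
/- Let (X,d) be a b-metric space with coefficient K₁ ≥ 1, let (Y,ρ) be a semimetric space, let C > 0 and 0 < α ≤ 1, and let f : X → Y be a bijective η-quasisymmetry with η(t) = C·t^α. If K₂ ≥ max(1, C·K₁^α), then ρ is a b-metric on Y with coefficient K₂, i.e. ρ(x',y') ≤ K₂(ρ(x',z') + ρ(z',y')) for all x',y',z' ∈ Y. -/
lemma aux_rpow_add_le_add_rpow {x y p : ℝ} (hx : 0 ≤ x) (hy : 0 ≤ y)
    (hp : 0 ≤ p) (hp1 : p ≤ 1) : (x + y) ^ p ≤ x ^ p + y ^ p := by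
  have h := NNReal.coe_le_coe.2 (NNReal.rpow_add_le_add_rpow x.toNNReal y.toNNReal hp hp1)
  simpa [NNReal.coe_rpow, Real.coe_toNNReal, hx, hy, Real.toNNReal_add hx hy,
    Real.coe_toNNReal x hx, Real.coe_toNNReal y hy] using h

/-- A surjective `t ↦ C t^α`-quasisymmetry (`C > 0`, `0 < α ≤ 1`) from a b-metric space
with coefficient `K₁` onto a semimetric space makes the target a b-metric with any
coefficient `K₂ ≥ max(1, C K₁^α)`. -/

theorem quasisymmetry_Crpow_preserves_bmetric {X Y : Type*}
    (K₁ K₂ C α : ℝ) (hK₁ : 1 ≤ K₁) (hC : 0 < C) (hα₀ : 0 < α) (hα₁ : α ≤ 1)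
    (hK₂ : max 1 (C * K₁ ^ α) ≤ K₂)
    (d : X → X → ℝ) (ρ : Y → Y → ℝ) (f : X → Y)
    (hd : IsBMetric K₁ d) (hρ : IsSemimetric ρ)
    (hf : Function.Bijective f)
    (hqs : IsQuasisymmetry d ρ (fun t => C * t ^ α) f) :
    ∀ x' y' z' : Y, ρ x' y' ≤ K₂ * (ρ x' z' + ρ z' y') := by
  obtain ⟨hρ0, hρsymm, hρeq⟩ := hρ
  obtain ⟨⟨hd0, hdsymm, hdeq⟩, hdtri⟩ := hd
  have hK₂1 : (1:ℝ) ≤ K₂ := le_trans (le_max_left _ _) hK₂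
  have hK₂' : C * K₁ ^ α ≤ K₂ := le_trans (le_max_right _ _) hK₂
  intro x' y' z'
  obtain ⟨x, rfl⟩ := hf.2 x'
  obtain ⟨y, rfl⟩ := hf.2 y'
  obtain ⟨z, rfl⟩ := hf.2 z'
  by_cases hzx : z = x
  · subst hzx
    have h0 : ρ (f z) (f z) = 0 := (hρeq _ _).2 rfl
    have h1 : 0 ≤ ρ (f z) (f y) := hρ0 _ _
    nlinarith [hρ0 (f z) (f y)]
  by_cases hzy : z = y
  · subst hzy
    have h0 : ρ (f z) (f z) = 0 := (hρeq _ _).2 rfl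
    have h2 : ρ (f x) (f z) = ρ (f z) (f x) := hρsymm _ _
    nlinarith [hρ0 (f x) (f z)]
  -- main case: u = d x z > 0, v = d z y > 0
  set u := d x z with hu_def
  set v := d z y with hv_def
  set w := d x y with hw_def
  have hu : 0 < u := lt_of_le_of_ne (hd0 x z) (fun h => hzx (((hdeq x z).1 h.symm).symm))
  have hv : 0 < v := lt_of_le_of_ne (hd0 z y) (fun h => hzy ((hdeq z y).1 h.symm))
  have hw0 : 0 ≤ w := hd0 x y
  -- quasisymmetry at base x : ρ(fx,fy) ≤ C (w/u)^α ρ(fx,fz)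
  have ht1 : (0:ℝ) ≤ w / u := div_nonneg hw0 hu.le
  have harg1 : d x y ≤ (w / u) * d x z := by
    rw [← hu_def, div_mul_cancel₀ _ hu.ne']
  have h1 : ρ (f x) (f y) ≤ C * (w / u) ^ α * ρ (f x) (f z) :=
    hqs x y z (w / u) ht1 harg1
  -- quasisymmetry at base y : ρ(fy,fx) ≤ C (w/v)^α ρ(fy,fz)
  have ht2 : (0:ℝ) ≤ w / v := div_nonneg hw0 hv.le
  have harg2 : d y x ≤ (w / v) * d y z := by
    rw [hdsymm y x, hdsymm y z, ← hw_def, ← hv_def, div_mul_cancel₀ _ hv.ne']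
  have h2 : ρ (f y) (f x) ≤ C * (w / v) ^ α * ρ (f y) (f z) :=
    hqs y x z (w / v) ht2 harg2
  rw [hρsymm (f y) (f x), hρsymm (f y) (f z)] at h2
  -- multiply by u^α, v^α
  have huα : (0:ℝ) < u ^ α := Real.rpow_pos_of_pos hu α
  have hvα : (0:ℝ) < v ^ α := Real.rpow_pos_of_pos hv α
  have hwα : (0:ℝ) ≤ w ^ α := Real.rpow_nonneg hw0 α
  have hdiv1 : (w / u) ^ α * u ^ α = w ^ α := by
    rw [Real.div_rpow hw0 hu.le, div_mul_cancel₀ _ huα.ne']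
  have hdiv2 : (w / v) ^ α * v ^ α = w ^ α := by
    rw [Real.div_rpow hw0 hv.le, div_mul_cancel₀ _ hvα.ne']
  have e1 : u ^ α * ρ (f x) (f y) ≤ C * w ^ α * ρ (f x) (f z) := by
    calc u ^ α * ρ (f x) (f y) ≤ u ^ α * (C * (w / u) ^ α * ρ (f x) (f z)) :=
          mul_le_mul_of_nonneg_left h1 huα.le
      _ = C * ((w / u) ^ α * u ^ α) * ρ (f x) (f z) := by ring
      _ = C * w ^ α * ρ (f x) (f z) := by rw [hdiv1]
  have e2 : v ^ α * ρ (f x) (f y) ≤ C * w ^ α * ρ (f z) (f y) := by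
    calc v ^ α * ρ (f x) (f y) ≤ v ^ α * (C * (w / v) ^ α * ρ (f z) (f y)) :=
          mul_le_mul_of_nonneg_left h2 hvα.le
      _ = C * ((w / v) ^ α * v ^ α) * ρ (f z) (f y) := by ring
      _ = C * w ^ α * ρ (f z) (f y) := by rw [hdiv2]
  -- w^α ≤ K₁^α (u^α + v^α)
  have hwK : w ^ α ≤ K₁ ^ α * (u ^ α + v ^ α) := by
    have h3 : w ≤ K₁ * (u + v) := hdtri x y z
    have h4 : w ^ α ≤ (K₁ * (u + v)) ^ α :=
      Real.rpow_le_rpow hw0 h3 hα₀.le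
    have h5 : (K₁ * (u + v)) ^ α = K₁ ^ α * (u + v) ^ α :=
      Real.mul_rpow (by linarith) (by positivity)
    have h6 : (u + v) ^ α ≤ u ^ α + v ^ α :=
      aux_rpow_add_le_add_rpow hu.le hv.le hα₀.le hα₁
    have hK₁α : (0:ℝ) ≤ K₁ ^ α := Real.rpow_nonneg (by linarith) α
    calc w ^ α ≤ K₁ ^ α * (u + v) ^ α := by rw [← h5]; exact h4
      _ ≤ K₁ ^ α * (u ^ α + v ^ α) := by nlinarith
  -- combine
  have hs1 : 0 ≤ ρ (f x) (f z) + ρ (f z) (f y) := by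
    have := hρ0 (f x) (f z); have := hρ0 (f z) (f y); linarith
  have hsum : (u ^ α + v ^ α) * ρ (f x) (f y)
      ≤ (u ^ α + v ^ α) * (C * K₁ ^ α * (ρ (f x) (f z) + ρ (f z) (f y))) := by
    have step1 : (u ^ α + v ^ α) * ρ (f x) (f y)
        ≤ C * w ^ α * (ρ (f x) (f z) + ρ (f z) (f y)) := by
      have : (u ^ α + v ^ α) * ρ (f x) (f y)
          = u ^ α * ρ (f x) (f y) + v ^ α * ρ (f x) (f y) := by ring
      rw [this, mul_add]
      exact add_le_add e1 e2
    have step2 : C * w ^ α * (ρ (f x) (f z) + ρ (f z) (f y))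
        ≤ C * (K₁ ^ α * (u ^ α + v ^ α)) * (ρ (f x) (f z) + ρ (f z) (f y)) := by
      apply mul_le_mul_of_nonneg_right _ hs1
      exact mul_le_mul_of_nonneg_left hwK hC.le
    calc (u ^ α + v ^ α) * ρ (f x) (f y)
        ≤ C * w ^ α * (ρ (f x) (f z) + ρ (f z) (f y)) := step1
      _ ≤ C * (K₁ ^ α * (u ^ α + v ^ α)) * (ρ (f x) (f z) + ρ (f z) (f y)) := step2
      _ = (u ^ α + v ^ α) * (C * K₁ ^ α * (ρ (f x) (f z) + ρ (f z) (f y))) := by ring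
  have hpos : (0:ℝ) < u ^ α + v ^ α := by linarith
  have hfin : ρ (f x) (f y) ≤ C * K₁ ^ α * (ρ (f x) (f z) + ρ (f z) (f y)) :=
    le_of_mul_le_mul_left hsum hpos
  calc ρ (f x) (f y) ≤ C * K₁ ^ α * (ρ (f x) (f z) + ρ (f z) (f y)) := hfin
    _ ≤ K₂ * (ρ (f x) (f z) + ρ (f z) (f y)) := mul_le_mul_of_nonneg_right hK₂' hs1
end

section
/- Let (X,d) be an additive metric space, let (Y,ρ) be a semimetric space, and let f : X → Y be a bijective η-quasisymmetry, where η : [0,∞) → [0,∞) is an increasing homeomorphism. Suppose that for all t₁, t₂, t₃, t₄, t₅ > 0 the inequality 1 + (1/t₁)·(1/t₅) ≤ max{1/t₁ + 1/t₂, 1/t₃ + 1/t₄} implies 1 + η(1/t₁)·η(1/t₅) ≤ max{1/η(t₁) + 1/η(t₂), 1/η(t₃) + 1/η(t₄)}. Then ρ is an additive metric on Y, i.e. ρ satisfies the four-point inequality ρ(x',y') + ρ(z',u') ≤ max{ρ(x',z') + ρ(y',u'), ρ(x',u') + ρ(y',z')} for all x',y',z',u' ∈ Y. -/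
lemma etaA (η : ℝ → ℝ) (hη : IsIncrHomeo η)
    (hcond : ∀ t₁ t₂ t₃ t₄ t₅ : ℝ, 0 < t₁ → 0 < t₂ → 0 < t₃ → 0 < t₄ → 0 < t₅ →
      1 + (1 / t₁) * (1 / t₅) ≤ max (1 / t₁ + 1 / t₂) (1 / t₃ + 1 / t₄) →
      1 + η (1 / t₁) * η (1 / t₅) ≤
        max (1 / η t₁ + 1 / η t₂) (1 / η t₃ + 1 / η t₄)) :
    ∀ t₁ t₂ : ℝ, 0 < t₁ → 0 < t₂ → 1 ≤ 1/t₁ + 1/t₂ → 1 ≤ 1/η t₁ + 1/η t₂ := by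
  have hηpos : ∀ t : ℝ, 0 < t → 0 < η t := by
    intro t ht
    have := hη.2.1 (Set.mem_Ici.mpr le_rfl) (Set.mem_Ici.mpr ht.le) ht
    rwa [hη.1] at this
  have strict : ∀ t₁ t₂ : ℝ, 0 < t₁ → 0 < t₂ → 1 < 1/t₁ + 1/t₂ →
      1 ≤ 1/η t₁ + 1/η t₂ := by
    intro t₁ t₂ h1 h2 h
    have hcpos : 0 < 1/t₁ + 1/t₂ - 1 := by linarith
    have ht₅ : 0 < 1/(t₁*(1/t₁ + 1/t₂ - 1)) := by positivity
    have key : 1 + (1/t₁) * (1/(1/(t₁*(1/t₁ + 1/t₂ - 1)))) ≤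
        max (1/t₁ + 1/t₂) (1/t₁ + 1/t₂) := by
      rw [one_div_one_div, max_self]
      have e : 1/t₁ * (t₁ * (1/t₁ + 1/t₂ - 1)) = 1/t₁ + 1/t₂ - 1 := by
        field_simp
      rw [e]; linarith
    have hc := hcond t₁ t₂ t₁ t₂ _ h1 h2 h1 h2 ht₅ key
    rw [max_self] at hc
    have h5 : 0 ≤ η (1/t₁) * η (1/(1/(t₁*(1/t₁ + 1/t₂ - 1)))) :=
      mul_nonneg (hηpos _ (by positivity)).le (hηpos _ (by positivity)).le
    linarith
  intro t₁ t₂ h1 h2 h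
  rcases lt_or_eq_of_le h with h'|h'
  · exact strict t₁ t₂ h1 h2 h'
  · have hηt₁ : 0 < η t₁ := hηpos _ h1
    have hIci : Set.Ici (0:ℝ) ∈ nhdsWithin t₁ (Set.Iio t₁) :=
      mem_nhdsWithin_of_mem_nhds (Ici_mem_nhds h1)
    have hcont : Filter.Tendsto η (nhdsWithin t₁ (Set.Iio t₁)) (nhds (η t₁)) :=
      (hη.2.2.1 t₁ (Set.mem_Ici.mpr h1.le)).tendsto.mono_left
        (nhdsWithin_le_of_mem hIci)
    have hT : Filter.Tendsto (fun s => 1/η s + 1/η t₂)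
        (nhdsWithin t₁ (Set.Iio t₁)) (nhds (1/η t₁ + 1/η t₂)) :=
      (Filter.Tendsto.div tendsto_const_nhds hcont hηt₁.ne').add tendsto_const_nhds
    refine ge_of_tendsto hT ?_
    filter_upwards [Ioo_mem_nhdsLT_of_mem (Set.mem_Ioc.mpr ⟨h1, le_rfl⟩)] with s hs
    refine strict s t₂ hs.1 h2 ?_
    have : 1/t₁ < 1/s := one_div_lt_one_div_of_lt hs.1 hs.2
    linarith


/-- If a surjective `η`-quasisymmetry from an additive metric space satisfies the
five-variable functional condition, then the target semimetric satisfies the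
four-point inequality, i.e. it is an additive metric. -/
theorem quasisymmetry_preserves_additive {X Y : Type*}
    (d : X → X → ℝ) (ρ : Y → Y → ℝ) (η : ℝ → ℝ) (f : X → Y)
    (hd : IsAdditiveMetric d) (hρ : IsSemimetric ρ)
    (hη : IsIncrHomeo η) (hf : Function.Bijective f)
    (hqs : IsQuasisymmetry d ρ η f)
    (hcond : ∀ t₁ t₂ t₃ t₄ t₅ : ℝ, 0 < t₁ → 0 < t₂ → 0 < t₃ → 0 < t₄ → 0 < t₅ →
      1 + (1 / t₁) * (1 / t₅) ≤ max (1 / t₁ + 1 / t₂) (1 / t₃ + 1 / t₄) →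
      1 + η (1 / t₁) * η (1 / t₅) ≤
        max (1 / η t₁ + 1 / η t₂) (1 / η t₃ + 1 / η t₄)) :
    ∀ x' y' z' u' : Y,
      ρ x' y' + ρ z' u' ≤ max (ρ x' z' + ρ y' u') (ρ x' u' + ρ y' z') := by
  obtain ⟨⟨⟨dnn, dsymm, dzero⟩, dtri⟩, dfour⟩ := hd
  obtain ⟨rnn, rsymm, rzero⟩ := hρ
  have hηpos : ∀ t : ℝ, 0 < t → 0 < η t := by
    intro t ht
    have := hη.2.1 (Set.mem_Ici.mpr le_rfl) (Set.mem_Ici.mpr ht.le) ht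
    rwa [hη.1] at this
  have hdpos : ∀ a b : X, a ≠ b → 0 < d a b := fun a b h =>
    (dnn a b).lt_of_ne fun e => h ((dzero a b).mp e.symm)
  -- triangle inequality for ρ
  have tri : ∀ a b c : X, ρ (f a) (f b) ≤ ρ (f a) (f c) + ρ (f c) (f b) := by
    intro a b c
    rcases eq_or_ne a b with rfl|hab
    · rw [(rzero _ _).mpr rfl]
      exact add_nonneg (rnn _ _) (rnn _ _)
    rcases eq_or_ne c a with rfl|hca
    · rw [(rzero (f c) (f c)).mpr rfl, zero_add]
    rcases eq_or_ne c b with rfl|hcb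
    · rw [(rzero (f c) (f c)).mpr rfl, add_zero]
    have pab := hdpos a b hab
    have pac := hdpos a c (Ne.symm hca)
    have pcb := hdpos c b hcb
    have h1 : 0 < d a b / d a c := div_pos pab pac
    have h2 : 0 < d a b / d c b := div_pos pab pcb
    have hsum : (1:ℝ) ≤ 1/(d a b / d a c) + 1/(d a b / d c b) := by
      rw [one_div_div, one_div_div, ← add_div, le_div_iff₀ pab, one_mul]
      exact dtri a b c
    have hA := etaA η hη hcond _ _ h1 h2 hsum
    have hn1 := hηpos _ h1
    have hn2 := hηpos _ h2
    have q1 : ρ (f a) (f b) ≤ η (d a b / d a c) * ρ (f a) (f c) :=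
      hqs a b c _ h1.le (le_of_eq (div_mul_cancel₀ _ pac.ne').symm)
    have q2 : ρ (f a) (f b) ≤ η (d a b / d c b) * ρ (f c) (f b) := by
      have := hqs b a c _ h2.le
        (by rw [dsymm b a, dsymm b c]; exact le_of_eq (div_mul_cancel₀ _ pcb.ne').symm)
      rwa [rsymm (f b) (f a), rsymm (f b) (f c)] at this
    have e1 : ρ (f a) (f b) / η (d a b / d a c) ≤ ρ (f a) (f c) :=
      (div_le_iff₀ hn1).mpr (by rw [mul_comm]; exact q1)
    have e2 : ρ (f a) (f b) / η (d a b / d c b) ≤ ρ (f c) (f b) :=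
      (div_le_iff₀ hn2).mpr (by rw [mul_comm]; exact q2)
    calc ρ (f a) (f b) = ρ (f a) (f b) * 1 := (mul_one _).symm
      _ ≤ ρ (f a) (f b) * (1/η (d a b / d a c) + 1/η (d a b / d c b)) :=
          mul_le_mul_of_nonneg_left hA (rnn _ _)
      _ = ρ (f a) (f b) / η (d a b / d a c) + ρ (f a) (f b) / η (d a b / d c b) := by
          ring
      _ ≤ _ := add_le_add e1 e2
  intro x' y' z' u'
  obtain ⟨x, rfl⟩ := hf.2 x'
  obtain ⟨y, rfl⟩ := hf.2 y'
  obtain ⟨z, rfl⟩ := hf.2 z'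
  obtain ⟨u, rfl⟩ := hf.2 u'
  rcases eq_or_ne x y with rfl|hxy
  · rw [(rzero _ _).mpr rfl, zero_add]
    refine le_max_of_le_left ?_
    have h := tri z u x
    rw [rsymm (f z) (f x)] at h
    linarith
  rcases eq_or_ne z u with rfl|hzu
  · rw [(rzero (f z) (f z)).mpr rfl, add_zero]
    refine le_max_of_le_left ?_
    have := tri x y z
    rwa [rsymm (f z) (f y)] at this
  rcases eq_or_ne x z with rfl|hxz
  · refine le_max_of_le_right (le_of_eq ?_)
    rw [rsymm (f y) (f x)]; ring
  rcases eq_or_ne x u with rfl|hxu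
  · refine le_max_of_le_left (le_of_eq ?_)
    rw [rsymm (f y) (f x), rsymm (f z) (f x)]; ring
  rcases eq_or_ne y z with rfl|hyz
  · exact le_max_of_le_left (le_of_eq rfl)
  rcases eq_or_ne y u with rfl|hyu
  · refine le_max_of_le_right (le_of_eq ?_)
    rw [rsymm (f z) (f y)]
  -- main case: four distinct points
  have pxy := hdpos x y hxy
  have pzu := hdpos z u hzu
  have pxz := hdpos x z hxz
  have pxu := hdpos x u hxu
  have pyz := hdpos y z hyz
  have pyu := hdpos y u hyu
  have h1 : 0 < d x y / d x z := div_pos pxy pxz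
  have h2 : 0 < d x y / d y u := div_pos pxy pyu
  have h3 : 0 < d x y / d x u := div_pos pxy pxu
  have h4 : 0 < d x y / d y z := div_pos pxy pyz
  have h5 : 0 < d x z / d z u := div_pos pxz pzu
  have key : 1 + (1/(d x y / d x z)) * (1/(d x z / d z u)) ≤
      max (1/(d x y / d x z) + 1/(d x y / d y u))
          (1/(d x y / d x u) + 1/(d x y / d y z)) := by
    rw [one_div_div, one_div_div, one_div_div, one_div_div, one_div_div]
    have e : d x z / d x y * (d z u / d x z) = d z u / d x y := by
      field_simp
    rw [e, ← add_div, ← add_div,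
      show (1:ℝ) + d z u / d x y = (d x y + d z u)/d x y from by
        rw [add_div, div_self pxy.ne']]
    rcases le_max_iff.mp (dfour x y z u) with h|h
    · exact le_max_of_le_left ((div_le_div_iff_of_pos_right pxy).mpr h)
    · exact le_max_of_le_right ((div_le_div_iff_of_pos_right pxy).mpr h)
  have Hc := hcond _ _ _ _ _ h1 h2 h3 h4 h5 key
  have hn1 := hηpos _ h1
  have hn2 := hηpos _ h2
  have hn3 := hηpos _ h3
  have hn4 := hηpos _ h4
  have q1 : ρ (f x) (f y) ≤ η (d x y / d x z) * ρ (f x) (f z) :=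
    hqs x y z _ h1.le (le_of_eq (div_mul_cancel₀ _ pxz.ne').symm)
  have q2 : ρ (f x) (f y) ≤ η (d x y / d y u) * ρ (f y) (f u) := by
    have := hqs y x u _ h2.le
      (by rw [dsymm y x]; exact le_of_eq (div_mul_cancel₀ _ pyu.ne').symm)
    rwa [rsymm (f y) (f x)] at this
  have q3 : ρ (f x) (f y) ≤ η (d x y / d x u) * ρ (f x) (f u) :=
    hqs x y u _ h3.le (le_of_eq (div_mul_cancel₀ _ pxu.ne').symm)
  have q4 : ρ (f x) (f y) ≤ η (d x y / d y z) * ρ (f y) (f z) := by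
    have := hqs y x z _ h4.le
      (by rw [dsymm y x]; exact le_of_eq (div_mul_cancel₀ _ pyz.ne').symm)
    rwa [rsymm (f y) (f x)] at this
  have q5 : ρ (f x) (f z) ≤ η (1/(d x y / d x z)) * ρ (f x) (f y) :=
    hqs x z y _ (by positivity)
      (by rw [one_div_div, div_mul_cancel₀ _ pxy.ne'])
  have q6 : ρ (f z) (f u) ≤ η (1/(d x z / d z u)) * ρ (f z) (f x) :=
    hqs z u x _ (by positivity)
      (by rw [one_div_div, dsymm z x, div_mul_cancel₀ _ pxz.ne'])
  have hE : ρ (f z) (f u) ≤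
      η (1/(d x y / d x z)) * η (1/(d x z / d z u)) * ρ (f x) (f y) := by
    have h6n : (0:ℝ) ≤ η (1/(d x z / d z u)) := (hηpos _ (by positivity)).le
    calc ρ (f z) (f u) ≤ η (1/(d x z / d z u)) * ρ (f z) (f x) := q6
      _ = η (1/(d x z / d z u)) * ρ (f x) (f z) := by rw [rsymm (f z) (f x)]
      _ ≤ η (1/(d x z / d z u)) * (η (1/(d x y / d x z)) * ρ (f x) (f y)) :=
          mul_le_mul_of_nonneg_left q5 h6n
      _ = _ := by ring
  have e1 : ρ (f x) (f y) / η (d x y / d x z) ≤ ρ (f x) (f z) :=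
    (div_le_iff₀ hn1).mpr (by rw [mul_comm]; exact q1)
  have e2 : ρ (f x) (f y) / η (d x y / d y u) ≤ ρ (f y) (f u) :=
    (div_le_iff₀ hn2).mpr (by rw [mul_comm]; exact q2)
  have e3 : ρ (f x) (f y) / η (d x y / d x u) ≤ ρ (f x) (f u) :=
    (div_le_iff₀ hn3).mpr (by rw [mul_comm]; exact q3)
  have e4 : ρ (f x) (f y) / η (d x y / d y z) ≤ ρ (f y) (f z) :=
    (div_le_iff₀ hn4).mpr (by rw [mul_comm]; exact q4)
  calc ρ (f x) (f y) + ρ (f z) (f u)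
      ≤ ρ (f x) (f y) +
        η (1/(d x y / d x z)) * η (1/(d x z / d z u)) * ρ (f x) (f y) :=
        add_le_add le_rfl hE
    _ = (1 + η (1/(d x y / d x z)) * η (1/(d x z / d z u))) * ρ (f x) (f y) := by
        ring
    _ ≤ max (1/η (d x y / d x z) + 1/η (d x y / d y u))
            (1/η (d x y / d x u) + 1/η (d x y / d y z)) * ρ (f x) (f y) :=
        mul_le_mul_of_nonneg_right Hc (rnn _ _)
    _ = max ((1/η (d x y / d x z) + 1/η (d x y / d y u)) * ρ (f x) (f y))
            ((1/η (d x y / d x u) + 1/η (d x y / d y z)) * ρ (f x) (f y)) :=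
        max_mul_of_nonneg _ _ (rnn _ _)
    _ ≤ max (ρ (f x) (f z) + ρ (f y) (f u)) (ρ (f x) (f u) + ρ (f y) (f z)) := by
        refine max_le_max ?_ ?_
        · calc (1/η (d x y / d x z) + 1/η (d x y / d y u)) * ρ (f x) (f y)
              = ρ (f x) (f y) / η (d x y / d x z) +
                ρ (f x) (f y) / η (d x y / d y u) := by ring
            _ ≤ _ := add_le_add e1 e2
        · calc (1/η (d x y / d x u) + 1/η (d x y / d y z)) * ρ (f x) (f y)
              = ρ (f x) (f y) / η (d x y / d x u) +
                ρ (f x) (f y) / η (d x y / d y z) := by ring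
            _ ≤ _ := add_le_add e3 e4
end

section
/- Let (X,d) be an additive metric space, let (Y,ρ) be a semimetric space, and let f : X → Y be a bijective η-quasisymmetry with η(t) = t. Then ρ is an additive metric on Y, i.e. ρ satisfies the four-point inequality ρ(x',y') + ρ(z',u') ≤ max{ρ(x',z') + ρ(y',u'), ρ(x',u') + ρ(y',z')} for all x',y',z',u' ∈ Y. -/
/-- A surjective `η`-quasisymmetry with `η(t) = t` from an additive metric space onto a
semimetric space forces the target to satisfy the four-point inequality. -/
theorem identity_quasisymmetry_preserves_additive {X Y : Type*}
    (d : X → X → ℝ) (ρ : Y → Y → ℝ) (f : X → Y)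
    (hd : IsAdditiveMetric d) (hρ : IsSemimetric ρ)
    (hf : Function.Bijective f)
    (hqs : IsQuasisymmetry d ρ (fun t => t) f) :
    ∀ x' y' z' u' : Y,
      ρ x' y' + ρ z' u' ≤ max (ρ x' z' + ρ y' u') (ρ x' u' + ρ y' z') := by
  obtain ⟨⟨dpos, dsymm, deq⟩, _⟩ := hd.1
  obtain ⟨rpos, rsymm, req⟩ := hρ
  -- star inequality
  have star : ∀ x a b : X, ρ (f x) (f a) * d x b ≤ d x a * ρ (f x) (f b) := by
    intro x a b
    by_cases hb : d x b = 0
    · have hxb : x = b := (deq x b).mp hb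
      subst hxb
      have : ρ (f x) (f x) = 0 := (req _ _).mpr rfl
      simp [hb, this]
    · have hb' : 0 < d x b := lt_of_le_of_ne (dpos x b) (Ne.symm hb)
      have ht : (0:ℝ) ≤ d x a / d x b := div_nonneg (dpos x a) (le_of_lt hb')
      have hle : d x a ≤ (d x a / d x b) * d x b := by
        rw [div_mul_cancel₀ _ hb]
      have h := hqs x a b (d x a / d x b) ht hle
      simp only at h
      have h2 := mul_le_mul_of_nonneg_right h (le_of_lt hb')
      calc ρ (f x) (f a) * d x b ≤ d x a / d x b * ρ (f x) (f b) * d x b := h2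
        _ = d x a * ρ (f x) (f b) := by field_simp
  -- equality
  have E : ∀ x a b : X, ρ (f x) (f a) * d x b = d x a * ρ (f x) (f b) := by
    intro x a b
    have h1 := star x a b
    have h2 := star x b a
    linarith
  -- global proportionality
  have C : ∀ x y z u : X, ρ (f x) (f y) * d z u = ρ (f z) (f u) * d x y := by
    intro x y z u
    by_cases hxz : x = z
    · subst hxz
      have := E x y u
      linarith [this]
    · have hne : d x z ≠ 0 := fun h => hxz ((deq x z).mp h)
      have e1 := E x y z
      have e2 := E z x u
      rw [rsymm (f z) (f x), dsymm z x] at e2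
      have key : ρ (f x) (f y) * d z u * d x z = ρ (f z) (f u) * d x y * d x z := by
        linear_combination d z u * e1 + d x y * e2
      exact mul_right_cancel₀ hne key
  intro x' y' z' u'
  obtain ⟨x, rfl⟩ := hf.surjective x'
  obtain ⟨y, rfl⟩ := hf.surjective y'
  obtain ⟨z, rfl⟩ := hf.surjective z'
  obtain ⟨u, rfl⟩ := hf.surjective u'
  have key : ∀ a₀ b₀ : X, d a₀ b₀ ≠ 0 →
      ρ (f x) (f y) + ρ (f z) (f u) ≤
        max (ρ (f x) (f z) + ρ (f y) (f u)) (ρ (f x) (f u) + ρ (f y) (f z)) := by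
    intro a₀ b₀ h0
    set c := ρ (f a₀) (f b₀) / d a₀ b₀ with hc
    have hcn : 0 ≤ c := div_nonneg (rpos _ _) (dpos _ _)
    have hprop : ∀ a b : X, ρ (f a) (f b) = c * d a b := by
      intro a b
      have := C a b a₀ b₀
      rw [hc]
      field_simp
      linarith [this]
    rw [hprop x y, hprop z u, hprop x z, hprop y u, hprop x u, hprop y z]
    rcases le_max_iff.mp (hd.2 x y z u) with h | h
    · apply le_max_of_le_left; nlinarith
    · apply le_max_of_le_right; nlinarith
  by_cases hxy : d x y = 0
  · by_cases hzu : d z u = 0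
    · have hx : x = y := (deq _ _).mp hxy
      have hz : z = u := (deq _ _).mp hzu
      subst hx; subst hz
      have r1 : ρ (f x) (f x) = 0 := (req _ _).mpr rfl
      have r2 : ρ (f z) (f z) = 0 := (req _ _).mpr rfl
      rw [r1, r2]
      have := rpos (f x) (f z)
      have := rpos (f z) (f x)
      exact le_max_of_le_left (by linarith)
    · exact key z u hzu
  · exact key x y hxy
end
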